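/- arXiv:2008.06699 — 4 statements merged into one kernel-verified Lean document; each statement's English description precedes it below -/
import Mathlib

section
/- Let a, b ∈ ℝ² be linearly independent vectors and define κ(a,b) := ⟨a,b⟩/(‖a‖·‖b‖), ρ(a,b) := ‖a‖/‖b‖ and φ(a,b) := (κ(a,b) − ρ(a,b))/√(1 − κ(a,b)²). Then for every ω ∈ (0, π), the unoriented angle between a and b − a equals ω if and only if φ(a,b) = cos ω / sin ω. In particular, cot of the unoriented angle between a and b − a equals φ(a,b). -/
open scoped RealInnerProductSpace

noncomputable def kappa (a b : EuclideanSpace ℝ (Fin 2)) : ℝ :=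
  ⟪a, b⟫ / (‖a‖ * ‖b‖)

noncomputable def rho (a b : EuclideanSpace ℝ (Fin 2)) : ℝ :=
  ‖a‖ / ‖b‖

noncomputable def phi (a b : EuclideanSpace ℝ (Fin 2)) : ℝ :=
  (kappa a b - rho a b) / Real.sqrt (1 - (kappa a b) ^ 2)

/-! The angle `θ` between `a` and `b - a` has `cos θ · ‖a‖‖b - a‖ = ⟪a, b⟫ - ‖a‖²` and
`sin θ · ‖a‖‖b - a‖ = √(‖a‖²‖b‖² - ⟪a, b⟫²)`, the Gram determinant being invariant under the
shear `b ↦ b - a`. The numerator and denominator of `φ(a, b)` are these two quantities divided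
by `‖a‖‖b‖`, so `cot θ = φ(a, b)` for all `a`, `b`. Linear independence puts `θ` in `(0, π)`,
where `cot` is injective. -/

open InnerProductGeometry Set

lemma Real.cot_injOn : InjOn Real.cot (Ioo 0 Real.pi) := by
  intro x ⟨hx0, hxπ⟩ y ⟨hy0, hyπ⟩ hxy
  have hsx := Real.sin_pos_of_pos_of_lt_pi hx0 hxπ
  have hsy := Real.sin_pos_of_pos_of_lt_pi hy0 hyπ
  rw [Real.cot_eq_cos_div_sin, Real.cot_eq_cos_div_sin, div_eq_div_iff hsx.ne' hsy.ne'] at hxy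
  have hsin : Real.sin (y - x) = 0 := by rw [Real.sin_sub]; linarith
  have := (Real.sin_eq_zero_iff_of_lt_of_lt (by linarith) (by linarith)).1 hsin
  linarith

section InnerProductSpace

variable {V : Type*} [NormedAddCommGroup V] [InnerProductSpace ℝ V]

lemma angle_mem_Ioo_of_linearIndependent {x y : V} (h : LinearIndependent ℝ ![x, y]) :
    angle x y ∈ Ioo 0 Real.pi := by
  have hy : ∀ r : ℝ, y ≠ r • x := fun r hr => by
    simpa using (LinearIndependent.pair_iff.1 h r (-1) (by simp [hr])).2
  refine ⟨(angle_nonneg x y).lt_of_ne' fun h0 => ?_, (angle_le_pi x y).lt_of_ne fun hπ => ?_⟩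
  · obtain ⟨-, r, -, hr⟩ := angle_eq_zero_iff.1 h0
    exact hy r hr
  · obtain ⟨-, r, -, hr⟩ := angle_eq_pi_iff.1 hπ
    exact hy r hr

lemma cot_angle (x y : V) :
    Real.cot (angle x y) = ⟪x, y⟫ / √(⟪x, x⟫ * ⟪y, y⟫ - ⟪x, y⟫ * ⟪x, y⟫) := by
  rcases eq_or_ne x 0 with rfl | hx
  · simp [angle_zero_left, Real.cot_eq_cos_div_sin]
  rcases eq_or_ne y 0 with rfl | hy
  · simp [angle_zero_right, Real.cot_eq_cos_div_sin]
  have hxy : ‖x‖ * ‖y‖ ≠ 0 := by positivity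
  rw [Real.cot_eq_cos_div_sin, ← mul_div_mul_right _ _ hxy, cos_angle_mul_norm_mul_norm,
    sin_angle_mul_norm_mul_norm]

lemma cot_angle_sub (x y : V) :
    Real.cot (angle x (y - x)) = (⟪x, y⟫ - ‖x‖ ^ 2) / √(‖x‖ ^ 2 * ‖y‖ ^ 2 - ⟪x, y⟫ ^ 2) := by
  rw [cot_angle]
  simp only [inner_sub_left, inner_sub_right, real_inner_self_eq_norm_sq, real_inner_comm x y]
  ring_nf

end InnerProductSpace

lemma phi_eq_div_sqrt (a b : EuclideanSpace ℝ (Fin 2)) :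
    phi a b = (⟪a, b⟫ - ‖a‖ ^ 2) / √(‖a‖ ^ 2 * ‖b‖ ^ 2 - ⟪a, b⟫ ^ 2) := by
  rcases eq_or_ne a 0 with rfl | ha
  · simp [phi, kappa, rho]
  rcases eq_or_ne b 0 with rfl | hb
  · simp [phi, kappa, rho]
  have hab : 0 < ‖a‖ * ‖b‖ := by positivity
  have hsqrt : √(1 - kappa a b ^ 2) = √(‖a‖ ^ 2 * ‖b‖ ^ 2 - ⟪a, b⟫ ^ 2) / (‖a‖ * ‖b‖) := by
    rw [← Real.sqrt_sq hab.le, ← Real.sqrt_div' _ (by positivity), kappa]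
    congr 1
    field_simp
  rw [phi, hsqrt, kappa, rho, div_div_eq_mul_div]
  congr 1
  field_simp

lemma cot_angle_sub_eq_phi (a b : EuclideanSpace ℝ (Fin 2)) :
    Real.cot (angle a (b - a)) = phi a b := by
  rw [cot_angle_sub, phi_eq_div_sqrt]

/-- The characteristic function `φ` parametrizes the circular arcs of constant scattering
angle: for linearly independent `a, b` and `ω ∈ (0, π)`, the unoriented angle between `a`
and `b − a` equals `ω` iff `φ(a,b) = cos ω / sin ω`; in particular
`cot (∠(a, b − a)) = φ(a,b)`. -/
theorem phi_eq_cot_angle (a b : EuclideanSpace ℝ (Fin 2))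
    (h : LinearIndependent ℝ ![a, b]) (ω : ℝ) (hω : ω ∈ Set.Ioo 0 Real.pi) :
    (InnerProductGeometry.angle a (b - a) = ω ↔ phi a b = Real.cos ω / Real.sin ω) ∧
    Real.cot (InnerProductGeometry.angle a (b - a)) = phi a b := by
  have hθ : angle a (b - a) ∈ Ioo 0 Real.pi := by
    refine angle_mem_Ioo_of_linearIndependent ?_
    simpa [sub_eq_neg_add] using (LinearIndependent.pair_add_smul_right_iff (c := (-1 : ℝ))).2 h
  refine ⟨?_, cot_angle_sub_eq_phi a b⟩
  rw [← cot_angle_sub_eq_phi, ← Real.cot_eq_cos_div_sin]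
  exact (Real.cot_injOn.eq_iff hθ hω).symm
end

section
/- Let x, d ∈ ℝ² with x ≠ d, let u ∈ ℝ² be a unit vector linearly independent from d − x, and let ω₂ ∈ (0, π). Set η := ⟨u, d − x⟩/‖d − x‖ and r := ‖d − x‖·(η − (cos ω₂/sin ω₂)·√(1 − η²)). If r > 0, then the point y := x + r·u satisfies: the unoriented angle between y − x and d − y equals ω₂. Conversely, if t > 0 is such that y := x + t·u satisfies that the unoriented angle between y − x and d − y equals ω₂, then t = r. (This is the content of Lemma 1 of the paper: the second scattering point y is uniquely determined by the first scattering point x, the unit direction u of the scattered photon, the detector d and the second scattering angle ω₂.) -/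
/-!
Write `w = d - x` and `c = ⟪u, w⟫`. For `y = x + t • u` the vector `d - y = w - t • u` has
component `c - t` along `u` and a component of length `b = √(‖w‖² - c²)` orthogonal to `u` that
does not depend on `t`; `b > 0` by the strict Cauchy–Schwarz inequality, since `u` and `w` are
linearly independent. Hence the angle between `u` and `d - y` is the angle in `(0, π)` with
cotangent `(c - t) / b`, and it equals `ω₂` exactly when `t = c - b cot ω₂`, which is `r`.
-/

open scoped RealInnerProductSpace

open Real InnerProductGeometry

lemma div_sqrt_sq_add_sq_eq_cos_iff {a b ω : ℝ} (hb : 0 < b) (hω : ω ∈ Set.Ioo 0 π) :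
    a / √(a ^ 2 + b ^ 2) = cos ω ↔ a = b * (cos ω / sin ω) := by
  have hsin : 0 < sin ω := sin_pos_of_pos_of_lt_pi hω.1 hω.2
  have hab : 0 < √(a ^ 2 + b ^ 2) := by positivity
  constructor
  · intro h
    have hsin_eq : sin ω = b / √(a ^ 2 + b ^ 2) := by
      have h1 : sin ω ^ 2 = (b / √(a ^ 2 + b ^ 2)) ^ 2 := by
        rw [div_pow, sq_sqrt (by positivity), sin_sq, ← h, div_pow, sq_sqrt (by positivity)]
        field_simp
        ring
      exact (pow_left_inj₀ hsin.le (by positivity) two_ne_zero).1 h1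
    rw [← h, hsin_eq]
    field_simp
  · intro h
    have hcross : a * sin ω = b * cos ω := by rw [h]; field_simp
    have hnorm : √(a ^ 2 + b ^ 2) = b / sin ω := by
      rw [sqrt_eq_iff_eq_sq (by positivity) (by positivity), div_pow, eq_div_iff (by positivity)]
      linear_combination (a * sin ω + b * cos ω) * hcross + b ^ 2 * sin_sq_add_cos_sq ω
    rw [hnorm]
    field_simp
    linear_combination hcross

variable {F : Type*} [NormedAddCommGroup F] [InnerProductSpace ℝ F]

lemma abs_real_inner_lt_norm_mul_norm_of_linearIndependent {u w : F}
    (h : LinearIndependent ℝ ![u, w]) : |⟪u, w⟫| < ‖u‖ * ‖w‖ := by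
  refine (abs_real_inner_le_norm u w).lt_of_ne fun heq => ?_
  rcases ((norm_inner_eq_norm_tfae ℝ u w).out 0 2).1 heq with hu | ⟨r, rfl⟩
  · exact h.ne_zero 0 hu
  · simpa using LinearIndependent.pair_iff.1 h r (-1) (by simp)

lemma norm_sub_smul_sq_of_norm_eq_one {u : F} (hu : ‖u‖ = 1) (w : F) (t : ℝ) :
    ‖w - t • u‖ ^ 2 = (⟪u, w⟫ - t) ^ 2 + (‖w‖ ^ 2 - ⟪u, w⟫ ^ 2) := by
  rw [norm_sub_sq_real, real_inner_smul_right, real_inner_comm, norm_smul, hu, mul_one,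
    Real.norm_eq_abs, sq_abs]
  ring

lemma angle_sub_smul_eq_iff {u w : F} (hu : ‖u‖ = 1) (huw : |⟪u, w⟫| < ‖w‖) {ω : ℝ}
    (hω : ω ∈ Set.Ioo 0 π) (t : ℝ) :
    angle u (w - t • u) = ω ↔ t = ⟪u, w⟫ - (cos ω / sin ω) * √(‖w‖ ^ 2 - ⟪u, w⟫ ^ 2) := by
  set b := √(‖w‖ ^ 2 - ⟪u, w⟫ ^ 2)
  have hgap : 0 < ‖w‖ ^ 2 - ⟪u, w⟫ ^ 2 := by
    nlinarith [abs_nonneg ⟪u, w⟫, sq_abs ⟪u, w⟫]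
  have hb : 0 < b := sqrt_pos.2 hgap
  have hnorm : ‖w - t • u‖ = √((⟪u, w⟫ - t) ^ 2 + b ^ 2) := by
    rw [sq_sqrt hgap.le, ← norm_sub_smul_sq_of_norm_eq_one hu, sqrt_sq (norm_nonneg _)]
  have hcos : cos (angle u (w - t • u)) = (⟪u, w⟫ - t) / √((⟪u, w⟫ - t) ^ 2 + b ^ 2) := by
    rw [cos_angle, hnorm, hu, one_mul, inner_sub_right, real_inner_smul_right,
      real_inner_self_eq_norm_sq, hu]
    ring
  rw [← injOn_cos.eq_iff ⟨angle_nonneg _ _, angle_le_pi _ _⟩ ⟨hω.1.le, hω.2.le⟩, hcos,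
    div_sqrt_sq_add_sq_eq_cos_iff hb hω]
  constructor <;> intro h <;> linarith

theorem second_scattering_point_general (x d u : EuclideanSpace ℝ (Fin 2))
    (hu : ‖u‖ = 1) (hind : LinearIndependent ℝ ![u, d - x])
    (ω₂ : ℝ) (hω₂ : ω₂ ∈ Set.Ioo 0 Real.pi) (η r : ℝ)
    (hη : η = ⟪u, d - x⟫ / ‖d - x‖)
    (hr : r = ‖d - x‖ * (η - (Real.cos ω₂ / Real.sin ω₂) * Real.sqrt (1 - η ^ 2))) :
    (0 < r →
      InnerProductGeometry.angle ((x + r • u) - x) (d - (x + r • u)) = ω₂) ∧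
    (∀ t : ℝ, 0 < t →
      InnerProductGeometry.angle ((x + t • u) - x) (d - (x + t • u)) = ω₂ → t = r) := by
  have huw : |⟪u, d - x⟫| < ‖d - x‖ := by
    simpa [hu] using abs_real_inner_lt_norm_mul_norm_of_linearIndependent hind
  have hr_inner : r = ⟪u, d - x⟫ - (cos ω₂ / sin ω₂) * √(‖d - x‖ ^ 2 - ⟪u, d - x⟫ ^ 2) := by
    have hpos : 0 < ‖d - x‖ := (abs_nonneg _).trans_lt huw
    have hfactor : ‖d - x‖ ^ 2 - ⟪u, d - x⟫ ^ 2 = ‖d - x‖ ^ 2 * (1 - η ^ 2) := by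
      rw [hη]; field_simp
    rw [hr, hfactor, sqrt_mul (sq_nonneg _), sqrt_sq hpos.le, hη]
    field_simp
  have hangle_iff (t : ℝ) (ht : 0 < t) : angle ((x + t • u) - x) (d - (x + t • u)) = ω₂ ↔ t = r := by
    rw [add_sub_cancel_left, sub_add_eq_sub_sub, angle_smul_left_of_pos _ _ ht,
      angle_sub_smul_eq_iff hu huw hω₂, hr_inner]
  exact ⟨fun hr0 => (hangle_iff r hr0).2 rfl, fun t ht => (hangle_iff t ht).1⟩

/-- **Lemma 1 of the paper.** The second scattering point `y = x + r • u` on the ray from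
the first scattering point `x` in the unit direction `u` is uniquely determined by the
second scattering angle `ω₂ ∈ (0, π)` (the unoriented angle between `y − x` and `d − y`),
with `r = ‖d − x‖ (η − cot ω₂ √(1 − η²))` and `η = ⟪u, d − x⟫ / ‖d − x‖`. -/
theorem second_scattering_point (x d u : EuclideanSpace ℝ (Fin 2)) (hxd : x ≠ d)
    (hu : ‖u‖ = 1) (hind : LinearIndependent ℝ ![u, d - x])
    (ω₂ : ℝ) (hω₂ : ω₂ ∈ Set.Ioo 0 Real.pi) (η r : ℝ)
    (hη : η = ⟪u, d - x⟫ / ‖d - x‖)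
    (hr : r = ‖d - x‖ * (η - (Real.cos ω₂ / Real.sin ω₂) * Real.sqrt (1 - η ^ 2))) :
    (0 < r →
      InnerProductGeometry.angle ((x + r • u) - x) (d - (x + r • u)) = ω₂) ∧
    (∀ t : ℝ, 0 < t →
      InnerProductGeometry.angle ((x + t • u) - x) (d - (x + t • u)) = ω₂ → t = r) :=
  second_scattering_point_general x d u hu hind ω₂ hω₂ η r hη hr
end

section
/- Define κ(a,b) := ⟨a,b⟩/(‖a‖·‖b‖), ρ(a,b) := ‖a‖/‖b‖, φ(a,b) := (κ(a,b) − ρ(a,b))/√(1 − κ(a,b)²), and ψ(a,b,c) := κ(a,b) + φ(a,c)/√(1 + φ(a,c)²). Let s, x, y, d ∈ ℝ² be such that y − x and x − s are linearly independent and y − x and d − x are linearly independent. Then ψ(y − x, x − s, d − x) = cos ω₁ + cos ω₂, where ω₁ is the unoriented angle between y − x and x − s (the first scattering angle) and ω₂ is the unoriented angle between y − x and d − y (the second scattering angle). -/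
open scoped RealInnerProductSpace

noncomputable def psi (a b c : EuclideanSpace ℝ (Fin 2)) : ℝ :=
  kappa a b + phi a c / Real.sqrt (1 + (phi a c) ^ 2)

lemma phi_term_eq (a c : EuclideanSpace ℝ (Fin 2))
    (h : LinearIndependent ℝ ![a, c]) :
    phi a c / Real.sqrt (1 + (phi a c) ^ 2) =
      Real.cos (InnerProductGeometry.angle a (c - a)) := by
  have ha : a ≠ 0 := by
    have := h.ne_zero 0
    simpa using this
  have hc : c ≠ 0 := by
    have := h.ne_zero 1
    simpa using this
  have hnr : ∀ r : ℝ, r • a ≠ c := (LinearIndependent.pair_iff' ha).1 h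
  set na := ‖a‖ with hna_def
  set nc := ‖c‖ with hnc_def
  set m := ‖c - a‖ with hm_def
  set ip : ℝ := ⟪a, c⟫ with hip_def
  have hna : 0 < na := norm_pos_iff.2 ha
  have hnc : 0 < nc := norm_pos_iff.2 hc
  -- strict Cauchy-Schwarz on both sides
  have hcs1 : ip < na * nc := by
    refine inner_lt_norm_mul_iff_real.2 ?_
    intro he
    exact hnr (nc / na) (by
      rw [div_eq_inv_mul, mul_smul, show nc • a = na • c from he,
        inv_smul_smul₀ hna.ne'])
  have hcs2 : -(na * nc) < ip := by
    have : ⟪a, -c⟫ < na * ‖-c‖ := by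
      refine inner_lt_norm_mul_iff_real.2 ?_
      intro he
      refine hnr (-(nc / na)) ?_
      rw [norm_neg] at he
      have : nc • a = -(na • c) := by simpa [smul_neg] using he
      rw [neg_smul, div_eq_inv_mul, mul_smul, this, smul_neg,
        inv_smul_smul₀ hna.ne', neg_neg]
    rw [inner_neg_right, norm_neg] at this
    linarith
  have hm2 : m ^ 2 = nc ^ 2 - 2 * ip + na ^ 2 := by
    rw [hm_def, hna_def, hnc_def, hip_def, norm_sub_sq_real, real_inner_comm]
  have hm : 0 < m := by
    have hm0 : (0:ℝ) ≤ m := norm_nonneg _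
    nlinarith [hm2, sq_nonneg (na - nc)]
  set S := Real.sqrt (na ^ 2 * nc ^ 2 - ip ^ 2) with hS_def
  have hS2 : S ^ 2 = na ^ 2 * nc ^ 2 - ip ^ 2 := Real.sq_sqrt (by nlinarith)
  have hS : 0 < S := Real.sqrt_pos.2 (by nlinarith)
  have hkappa : kappa a c = ip / (na * nc) := rfl
  have hsqrt1 : Real.sqrt (1 - (kappa a c) ^ 2) = S / (na * nc) := by
    rw [show 1 - (kappa a c) ^ 2 = (S / (na * nc)) ^ 2 by
      rw [hkappa]; field_simp; nlinarith]
    exact Real.sqrt_sq (by positivity)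
  have hphi : phi a c = (ip - na ^ 2) / S := by
    rw [phi, hsqrt1, hkappa, rho, ← hna_def, ← hnc_def]
    field_simp
  have hsqrt2 : Real.sqrt (1 + (phi a c) ^ 2) = na * m / S := by
    rw [show 1 + (phi a c) ^ 2 = (na * m / S) ^ 2 by
      rw [hphi]; field_simp; nlinarith]
    exact Real.sqrt_sq (by positivity)
  have hinner : ⟪a, c - a⟫ = ip - na ^ 2 := by
    rw [inner_sub_right, hip_def, real_inner_self_eq_norm_sq]
  rw [InnerProductGeometry.cos_angle, hinner, hsqrt2, hphi, ← hna_def, ← hm_def]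
  field_simp

/-- The phase `ψ(y−x, x−s, d−x)` of the second-order scattering operator equals
`cos ω₁ + cos ω₂`, where `ω₁` is the unoriented angle between `y − x` and `x − s`
(first scattering angle) and `ω₂` is the unoriented angle between `y − x` and `d − y`
(second scattering angle). -/
theorem psi_eq_sum_cosines (s x y d : EuclideanSpace ℝ (Fin 2))
    (h₁ : LinearIndependent ℝ ![y - x, x - s])
    (h₂ : LinearIndependent ℝ ![y - x, d - x]) :
    psi (y - x) (x - s) (d - x) =
      Real.cos (InnerProductGeometry.angle (y - x) (x - s)) +
        Real.cos (InnerProductGeometry.angle (y - x) (d - y)) := by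
  have hsub : d - x - (y - x) = d - y := by abel
  rw [psi, InnerProductGeometry.cos_angle, ← hsub, ← phi_term_eq _ _ h₂]
  rfl
end

section
/- Define κ(a,b) := ⟨a,b⟩/(‖a‖·‖b‖), ρ(a,b) := ‖a‖/‖b‖ and φ(a,b) := (κ(a,b) − ρ(a,b))/√(1 − κ(a,b)²). For any linearly independent a, b ∈ ℝ², the gradient with respect to a of the map a ↦ φ(a,b) is nonzero. -/
open scoped RealInnerProductSpace

/-!
Along the ray `t ↦ t • a` the cosine `κ(t • a, b)` is constant while `ρ(t • a, b) = t ρ(a, b)`,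
so `φ(t • a, b) = (κ - t ρ) / √(1 - κ²)` is affine in `t` with slope `-ρ / √(1 - κ²) < 0`.
Linear independence gives `a, b ≠ 0` and the strict Cauchy–Schwarz inequality `|κ| < 1`, which
make `φ(·, b)` differentiable at `a`; hence `Dφ(a) a ≠ 0` and the gradient cannot vanish.
-/

theorem abs_real_inner_div_norm_mul_norm_lt_one {F : Type*} [NormedAddCommGroup F]
    [InnerProductSpace ℝ F] {x y : F} (h : LinearIndependent ℝ ![x, y]) :
    |⟪x, y⟫ / (‖x‖ * ‖y‖)| < 1 := by
  refine (abs_real_inner_div_norm_mul_norm_le_one x y).lt_of_ne fun h_eq => ?_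
  obtain ⟨-, r, -, rfl⟩ := (abs_real_inner_div_norm_mul_norm_eq_one_iff x y).mp h_eq
  have := (LinearIndependent.pair_iff.mp h r (-1) (by rw [neg_one_smul, add_neg_cancel])).2
  norm_num at this

theorem fderiv_apply_self_eq_of_hasDerivAt_smul {𝕜 E F : Type*} [NontriviallyNormedField 𝕜]
    [NormedAddCommGroup E] [NormedSpace 𝕜 E] [NormedAddCommGroup F] [NormedSpace 𝕜 F]
    {f : E → F} {x : E} {f' : F} (hf : DifferentiableAt 𝕜 f x)
    (h : HasDerivAt (fun t : 𝕜 => f (t • x)) f' 1) :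
    fderiv 𝕜 f x x = f' := by
  have hline : HasDerivAt (fun t : 𝕜 => t • x) x 1 := by
    simpa using (hasDerivAt_id (1 : 𝕜)).smul_const x
  exact (hf.hasFDerivAt.comp_hasDerivAt_of_eq 1 hline (one_smul 𝕜 x).symm).unique h

variable {a b : EuclideanSpace ℝ (Fin 2)}

theorem kappa_smul_left {t : ℝ} (ht : 0 < t) : kappa (t • a) b = kappa a b := by
  rw [kappa, kappa, real_inner_smul_left, norm_smul, Real.norm_of_nonneg ht.le, mul_assoc,
    mul_div_mul_left _ _ ht.ne']

theorem rho_smul_left {t : ℝ} (ht : 0 ≤ t) : rho (t • a) b = t * rho a b := by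
  rw [rho, rho, norm_smul, Real.norm_of_nonneg ht, mul_div_assoc]

theorem phi_smul_left {t : ℝ} (ht : 0 < t) :
    phi (t • a) b = (kappa a b - t * rho a b) / √(1 - kappa a b ^ 2) := by
  rw [phi, kappa_smul_left ht, rho_smul_left ht.le]

theorem differentiableAt_kappa_left (ha : a ≠ 0) (hb : b ≠ 0) :
    DifferentiableAt ℝ (fun a' => kappa a' b) a := by
  have h_inner : DifferentiableAt ℝ (fun a' => ⟪a', b⟫) a :=
    differentiableAt_id.inner ℝ (differentiableAt_const b)
  have h_norm : DifferentiableAt ℝ (fun a' => ‖a'‖) a := differentiableAt_id.norm ℝ ha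
  unfold kappa
  fun_prop (disch := simp [*])

theorem differentiableAt_rho_left (ha : a ≠ 0) :
    DifferentiableAt ℝ (fun a' => rho a' b) a := by
  have h_norm : DifferentiableAt ℝ (fun a' => ‖a'‖) a := differentiableAt_id.norm ℝ ha
  unfold rho
  fun_prop

theorem differentiableAt_phi_left (ha : a ≠ 0) (hb : b ≠ 0) (hκ : |kappa a b| < 1) :
    DifferentiableAt ℝ (fun a' => phi a' b) a := by
  have hκ' : 0 < 1 - kappa a b ^ 2 := sub_pos.mpr ((sq_lt_one_iff_abs_lt_one _).mpr hκ)
  have hk := differentiableAt_kappa_left ha hb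
  have hr := differentiableAt_rho_left (b := b) ha
  unfold phi
  fun_prop (disch := first | exact hκ'.ne' | exact (Real.sqrt_pos.mpr hκ').ne')

theorem hasDerivAt_phi_smul_left_one :
    HasDerivAt (fun t : ℝ => phi (t • a) b) (-rho a b / √(1 - kappa a b ^ 2)) 1 := by
  have h_affine : HasDerivAt (fun t : ℝ => (kappa a b - t * rho a b) / √(1 - kappa a b ^ 2))
      (-rho a b / √(1 - kappa a b ^ 2)) 1 := by
    simpa using (((hasDerivAt_id (1 : ℝ)).mul_const (rho a b)).const_sub (kappa a b)).div_const _
  refine h_affine.congr_of_eventuallyEq ?_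
  filter_upwards [eventually_gt_nhds one_pos] with t ht
  exact phi_smul_left ht

/-- Nondegeneracy of the phase of the linearized first-order scattering operator:
for linearly independent `a, b ∈ ℝ²`, the gradient of `a ↦ φ(a, b)` does not vanish. -/
theorem gradient_phi_ne_zero (a b : EuclideanSpace ℝ (Fin 2))
    (h : LinearIndependent ℝ ![a, b]) :
    gradient (fun a' => phi a' b) a ≠ 0 := by
  have ha : a ≠ 0 := h.ne_zero 0
  have hb : b ≠ 0 := h.ne_zero 1
  have hκ : |kappa a b| < 1 := abs_real_inner_div_norm_mul_norm_lt_one h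
  have hρ : 0 < rho a b := div_pos (norm_pos_iff.mpr ha) (norm_pos_iff.mpr hb)
  have hS : 0 < √(1 - kappa a b ^ 2) :=
    Real.sqrt_pos.mpr (sub_pos.mpr ((sq_lt_one_iff_abs_lt_one _).mpr hκ))
  have h_radial : fderiv ℝ (fun a' => phi a' b) a a = -rho a b / √(1 - kappa a b ^ 2) :=
    fderiv_apply_self_eq_of_hasDerivAt_smul (differentiableAt_phi_left ha hb hκ)
      hasDerivAt_phi_smul_left_one
  intro h_grad
  rw [← toDual_gradient, h_grad, map_zero, zero_apply] at h_radial
  exact (div_neg_of_neg_of_pos (neg_neg_of_pos hρ) hS).ne' h_radial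
end
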